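/- arXiv:math/0312156 — 2 statements merged into one kernel-verified Lean document; each statement's English description precedes it below -/
import Mathlib

section
/- Nontriviality of the 2-cocycle: There is no ℂ-linear map θ: L → ℂ such that c(μ,ν) = θ([μ,ν]) for all μ, ν ∈ L = sl₂(ℂ[x,y]); that is, the 2-cocycle c(μ,ν) = ε(Tr(∂ₓμ · ∂_yν − ∂_yμ · ∂ₓν)) is not a Lie algebra 2-coboundary, so it represents a nonzero class in H²(sl₂[x,y]). -/
/-!
Take `h = diag(1, -1)` and `μ = x h`, `ν = y h`. These commute, so `θ ⁅μ, ν⁆ = 0` for every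
linear `θ`, while `∂ₓμ = ∂_yν = h` and `∂_yμ = ∂ₓν = 0` give `c(μ, ν) = Tr(h²) = 2`.
-/

open scoped BigOperators

attribute [local instance 100] LieRing.ofAssociativeRing

/-- `R = ℂ[x,y]`, the polynomial ring in two variables `x = X 0`, `y = X 1`. -/
abbrev PolyXY : Type := MvPolynomial (Fin 2) ℂ

/-- Entrywise partial derivative `∂ₓ` of a matrix over `ℂ[x,y]`. -/
noncomputable def dX (μ : Matrix (Fin 2) (Fin 2) PolyXY) :
    Matrix (Fin 2) (Fin 2) PolyXY :=
  Matrix.of fun i j => MvPolynomial.pderiv (0 : Fin 2) (μ i j)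

/-- Entrywise partial derivative `∂_y` of a matrix over `ℂ[x,y]`. -/
noncomputable def dY (μ : Matrix (Fin 2) (Fin 2) PolyXY) :
    Matrix (Fin 2) (Fin 2) PolyXY :=
  Matrix.of fun i j => MvPolynomial.pderiv (1 : Fin 2) (μ i j)

/-- The 2-cochain `c(μ,ν) = ε(Tr(∂ₓμ · ∂_yν − ∂_yμ · ∂ₓν))`, where `ε` is the
constant-term homomorphism. -/
noncomputable def cocycleC (μ ν : Matrix (Fin 2) (Fin 2) PolyXY) : ℂ :=
  MvPolynomial.constantCoeff (Matrix.trace (dX μ * dY ν - dY μ * dX ν))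

/-- `L = sl₂(ℂ[x,y])`: the trace-zero `2 × 2` matrices over `ℂ[x,y]`, as a
Lie algebra over `ℂ`. -/
noncomputable def sl2XY : LieSubalgebra ℂ (Matrix (Fin 2) (Fin 2) PolyXY) where
  carrier := {μ | Matrix.trace μ = 0}
  add_mem' := fun {a b} ha hb => by
    simp only [Set.mem_setOf_eq] at *
    rw [Matrix.trace_add, ha, hb, add_zero]
  zero_mem' := by simp [Set.mem_setOf_eq]
  smul_mem' := fun c {a} ha => by
    simp only [Set.mem_setOf_eq] at *
    rw [Matrix.trace_smul, ha, smul_zero]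
  lie_mem' := fun {a b} _ _ => by
    simp only [Set.mem_setOf_eq]
    rw [Ring.lie_def, Matrix.trace_sub, Matrix.trace_mul_comm, sub_self]

open MvPolynomial

lemma dX_smul_map_C (p : PolyXY) (A : Matrix (Fin 2) (Fin 2) ℂ) :
    dX (p • A.map C) = pderiv 0 p • A.map C := by
  ext i j
  simp [dX, Derivation.leibniz, mul_comm]

lemma dY_smul_map_C (p : PolyXY) (A : Matrix (Fin 2) (Fin 2) ℂ) :
    dY (p • A.map C) = pderiv 1 p • A.map C := by
  ext i j
  simp [dY, Derivation.leibniz, mul_comm]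

lemma cocycleC_smul_map_C (p q : PolyXY) (A B : Matrix (Fin 2) (Fin 2) ℂ) :
    cocycleC (p • A.map C) (q • B.map C) =
      constantCoeff (pderiv 0 p * pderiv 1 q - pderiv 1 p * pderiv 0 q) * (A * B).trace := by
  rw [cocycleC, dX_smul_map_C, dY_smul_map_C, dX_smul_map_C, dY_smul_map_C]
  simp only [Matrix.smul_mul, Matrix.mul_smul, smul_smul, Matrix.trace_sub, Matrix.trace_smul]
  rw [← sub_smul, ← Matrix.map_mul, ← AddMonoidHom.map_trace, smul_eq_mul, map_mul,
    constantCoeff_C, mul_comm (pderiv 1 q), mul_comm (pderiv 0 q)]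

lemma smul_map_C_mem_sl2XY (p : PolyXY) {A : Matrix (Fin 2) (Fin 2) ℂ} (hA : A.trace = 0) :
    p • A.map C ∈ sl2XY := by
  show (p • A.map C).trace = 0
  rw [Matrix.trace_smul, ← AddMonoidHom.map_trace, hA, map_zero, smul_zero]

/-- **Nontriviality of the 2-cocycle** (cf. Proposition 3.6 of the paper):
the cocycle `c(μ,ν) = ε(Tr(∂ₓμ · ∂_yν − ∂_yμ · ∂ₓν))` on `sl₂(ℂ[x,y])` is not
a coboundary `θ ∘ [·,·]` for any `ℂ`-linear `θ`, so it represents a nonzero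
class in `H²(sl₂[x,y])`. -/
theorem sl2_polyXY_cocycle_nontrivial :
    ¬∃ θ : sl2XY →ₗ[ℂ] ℂ,
      ∀ μ ν : sl2XY, cocycleC (μ : Matrix (Fin 2) (Fin 2) PolyXY) ν = θ ⁅μ, ν⁆ := by
  rintro ⟨θ, hθ⟩
  let h : Matrix (Fin 2) (Fin 2) ℂ := !![1, 0; 0, -1]
  have htrace : h.trace = 0 := by simp [h, Matrix.trace_fin_two]
  let μ : sl2XY := ⟨X 0 • h.map C, smul_map_C_mem_sl2XY _ htrace⟩
  let ν : sl2XY := ⟨X 1 • h.map C, smul_map_C_mem_sl2XY _ htrace⟩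
  have hbracket : ⁅μ, ν⁆ = 0 :=
    Subtype.ext (((Commute.refl _).smul_left _).smul_right _).lie_eq
  have hcocycle : cocycleC (μ : Matrix (Fin 2) (Fin 2) PolyXY) ν = 2 := by
    rw [cocycleC_smul_map_C]
    norm_num [h, Matrix.trace_fin_two, pderiv_X]
  have := hθ μ ν
  rw [hbracket, map_zero, hcocycle] at this
  exact two_ne_zero this
end

section
/- The square of the class of c is null in H⁴(sl₂[x,y]) (Proposition 3.6, cochain form): There exists an alternating ℂ-trilinear map b: L × L × L → ℂ such that for all μ₁, μ₂, μ₃, μ₄ ∈ L = sl₂(ℂ[x,y]), ∑_{1 ≤ i < j ≤ 4} (−1)^{i+j} b([μᵢ,μⱼ], μ_k, μ_l) = c(μ₁,μ₂)c(μ₃,μ₄) − c(μ₁,μ₃)c(μ₂,μ₄) + c(μ₁,μ₄)c(μ₂,μ₃), where for each pair i < j the indices k < l are the two remaining elements of {1,2,3,4}. In other words, the cup square c ∪ c of the 2-cocycle c is the Chevalley–Eilenberg coboundary of a 3-cochain. -/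
open scoped BigOperators

attribute [local instance 100] LieRing.ofAssociativeRing

/-!
Write `D = ∂ₓ`, `E = ∂_y` and `ω(A, B) = Tr(DA·EB − EA·DB)`, so that `c = ε ∘ ω`, and let `τ` be the
alternation of `Tr(EA·EB·D²C)`. When `δτ` is expanded with the Leibniz rule, the terms containing
a second derivative cancel by the Jacobi identity and the invariance `Tr([P,Q]R) = Tr(P[Q,R])`,
leaving
`δτ = 2 ∑_{i<j} (−1)^(i+j) Tr([EAₖ, EAₗ][DAᵢ, DAⱼ])`. On `sl₂` the identity
`Tr([P,Q][U,V]) = 2(Tr(PV)Tr(QU) − Tr(PU)Tr(QV))` turns this into `−4 ω ∪ ω`, already before `ε` is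
applied, so `b = −¼ ε ∘ τ` works.
-/

open Matrix

theorem MultilinearMap.alternatization_apply_fin_three {R M N : Type*} [CommRing R]
    [AddCommGroup M] [Module R M] [AddCommGroup N] [Module R N]
    (m : MultilinearMap R (fun _ : Fin 3 => M) N) (a b c : M) :
    m.alternatization ![a, b, c] =
      m ![a, b, c] - m ![b, a, c] - m ![a, c, b] - m ![c, b, a] + m ![b, c, a] + m ![c, a, b] := by
  have huniv : (Finset.univ : Finset (Equiv.Perm (Fin 3))) =
      {1, .swap 0 1, .swap 1 2, .swap 0 2, .swap 0 1 * .swap 1 2, .swap 1 2 * .swap 0 1} := by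
    decide
  have reindex (σ : Equiv.Perm (Fin 3)) (w : Fin 3 → M) (h : ∀ i, ![a, b, c] (σ i) = w i) :
      m.domDomCongr σ ![a, b, c] = m w := congrArg m (funext h)
  rw [MultilinearMap.alternatization_apply, huniv]
  simp +decide only [Finset.sum_insert, Finset.mem_insert,
    Finset.mem_singleton, Finset.sum_singleton, Equiv.Perm.sign_mul, Equiv.Perm.sign_swap',
    Units.smul_def]
  rw [reindex 1 ![a, b, c], reindex (.swap 0 1) ![b, a, c], reindex (.swap 1 2) ![a, c, b],
    reindex (.swap 0 2) ![c, b, a], reindex (.swap 0 1 * .swap 1 2) ![b, c, a],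
    reindex (.swap 1 2 * .swap 0 1) ![c, a, b]]
  · simp only [Equiv.Perm.sign_one, Units.val_one, one_smul, ↓reduceIte, Units.val_neg,
      Int.reduceNeg, neg_smul, mul_neg, mul_one, neg_neg]
    abel
  all_goals intro i; fin_cases i <;> rfl

section LieCochains

variable {S M : Type*} [CommRing S] [AddCommGroup M] [Module S M]

def AlternatingMap.lieCoboundary₃ {L : Type*} [LieRing L] [Module S L]
    (f : L [⋀^Fin 3]→ₗ[S] M) (x₁ x₂ x₃ x₄ : L) : M :=
  -f ![⁅x₁, x₂⁆, x₃, x₄] + f ![⁅x₁, x₃⁆, x₂, x₄] - f ![⁅x₁, x₄⁆, x₂, x₃]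
    - f ![⁅x₂, x₃⁆, x₁, x₄] + f ![⁅x₂, x₄⁆, x₁, x₃] - f ![⁅x₃, x₄⁆, x₁, x₂]

theorem AlternatingMap.lieCoboundary₃_compAlternatingMap {L N : Type*} [LieRing L] [Module S L]
    [AddCommGroup N] [Module S N] (g : M →ₗ[S] N) (f : L [⋀^Fin 3]→ₗ[S] M) (x₁ x₂ x₃ x₄ : L) :
    (g.compAlternatingMap f).lieCoboundary₃ x₁ x₂ x₃ x₄ = g (f.lieCoboundary₃ x₁ x₂ x₃ x₄) := by
  simp only [lieCoboundary₃, LinearMap.compAlternatingMap_apply, map_add, map_sub, map_neg]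

theorem AlternatingMap.lieCoboundary₃_compLieHom {L L' : Type*} [LieRing L] [LieAlgebra S L]
    [LieRing L'] [LieAlgebra S L'] (f : L' [⋀^Fin 3]→ₗ[S] M) (φ : L →ₗ⁅S⁆ L') (x₁ x₂ x₃ x₄ : L) :
    (f.compLinearMap φ.toLinearMap).lieCoboundary₃ x₁ x₂ x₃ x₄ =
      f.lieCoboundary₃ (φ x₁) (φ x₂) (φ x₃) (φ x₄) := by
  have map_vec (a b c : L) : (fun i => φ (![a, b, c] i)) = ![φ a, φ b, φ c] := by
    ext i; fin_cases i <;> rfl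
  simp only [lieCoboundary₃, compLinearMap_apply, LieHom.coe_toLinearMap, map_vec, LieHom.map_lie]

end LieCochains

def cupSquare {L A : Type*} [Ring A] (c : L → L → A) (x₁ x₂ x₃ x₄ : L) : A :=
  c x₁ x₂ * c x₃ x₄ - c x₁ x₃ * c x₂ x₄ + c x₁ x₄ * c x₂ x₃

theorem map_cupSquare {L A B : Type*} [Ring A] [Ring B] (g : A →+* B) (c : L → L → A)
    (x₁ x₂ x₃ x₄ : L) :
    g (cupSquare c x₁ x₂ x₃ x₄) = cupSquare (fun x y => g (c x y)) x₁ x₂ x₃ x₄ := by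
  simp only [cupSquare, map_add, map_sub, map_mul]

theorem Matrix.apply_one_one_eq_neg_of_trace_eq_zero {R : Type*} [CommRing R]
    {A : Matrix (Fin 2) (Fin 2) R} (h : trace A = 0) : A 1 1 = -A 0 0 := by
  rw [trace_fin_two] at h
  linear_combination h

theorem Matrix.trace_lie_mul_lie_of_trace_eq_zero {R : Type*} [CommRing R]
    {P Q U V : Matrix (Fin 2) (Fin 2) R} (hP : trace P = 0) (hQ : trace Q = 0)
    (hU : trace U = 0) (hV : trace V = 0) :
    trace (⁅P, Q⁆ * ⁅U, V⁆) =
      2 * (trace (P * V) * trace (Q * U) - trace (P * U) * trace (Q * V)) := by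
  simp only [Ring.lie_def, trace_fin_two, mul_apply, Fin.sum_univ_two, sub_apply]
  rw [apply_one_one_eq_neg_of_trace_eq_zero hP, apply_one_one_eq_neg_of_trace_eq_zero hQ,
    apply_one_one_eq_neg_of_trace_eq_zero hU, apply_one_one_eq_neg_of_trace_eq_zero hV]
  ring

section DerivationCochains

variable {S R : Type*} [CommRing S] [CommRing R] [Algebra S R] (D E : Derivation S R R)
  {n : Type*} [Fintype n]

theorem Matrix.trace_map_derivation (A : Matrix n n R) : trace (A.map D) = D (trace A) :=
  (AddMonoidHom.map_trace D A).symm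

def derivPairing (A B : Matrix n n R) : R :=
  trace (A.map D * B.map E - A.map E * B.map D)

variable [DecidableEq n]

def derivTripleProduct : MultilinearMap S (fun _ : Fin 3 => Matrix n n R) R :=
  (traceLinearMap n S R).compMultilinearMap
    ((MultilinearMap.mkPiAlgebraFin S 3 (Matrix n n R)).compLinearMap
      ![E.toLinearMap.mapMatrix, E.toLinearMap.mapMatrix,
        (D.toLinearMap ∘ₗ D.toLinearMap).mapMatrix])

theorem derivTripleProduct_apply (A B C : Matrix n n R) :
    derivTripleProduct D E ![A, B, C] = trace (A.map E * B.map E * (C.map D).map D) := by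
  simp [derivTripleProduct, MultilinearMap.mkPiAlgebraFin_apply, List.ofFn_succ, mul_assoc,
    Matrix.map_map]

theorem lieCoboundary₃_alternatization_derivTripleProduct (A₁ A₂ A₃ A₄ : Matrix (Fin 2) (Fin 2) R) :
    (derivTripleProduct D E).alternatization.lieCoboundary₃ A₁ A₂ A₃ A₄ =
      2 * (-trace (⁅A₃.map E, A₄.map E⁆ * ⁅A₁.map D, A₂.map D⁆)
        + trace (⁅A₂.map E, A₄.map E⁆ * ⁅A₁.map D, A₃.map D⁆)
        - trace (⁅A₂.map E, A₃.map E⁆ * ⁅A₁.map D, A₄.map D⁆)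
        - trace (⁅A₁.map E, A₄.map E⁆ * ⁅A₂.map D, A₃.map D⁆)
        + trace (⁅A₁.map E, A₃.map E⁆ * ⁅A₂.map D, A₄.map D⁆)
        - trace (⁅A₁.map E, A₂.map E⁆ * ⁅A₃.map D, A₄.map D⁆)) := by
  simp only [AlternatingMap.lieCoboundary₃, MultilinearMap.alternatization_apply_fin_three,
    derivTripleProduct_apply, Ring.lie_def, trace_fin_two, mul_apply, Fin.sum_univ_two,
    Matrix.map_apply, Matrix.sub_apply, Derivation.leibniz, smul_eq_mul, map_add, map_sub]
  ring

theorem lieCoboundary₃_alternatization_derivTripleProduct_of_trace_eq_zero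
    {A₁ A₂ A₃ A₄ : Matrix (Fin 2) (Fin 2) R} (h₁ : trace A₁ = 0) (h₂ : trace A₂ = 0)
    (h₃ : trace A₃ = 0) (h₄ : trace A₄ = 0) :
    (derivTripleProduct D E).alternatization.lieCoboundary₃ A₁ A₂ A₃ A₄ =
      -4 * cupSquare (derivPairing D E) A₁ A₂ A₃ A₄ := by
  rw [lieCoboundary₃_alternatization_derivTripleProduct]
  simp only [trace_lie_mul_lie_of_trace_eq_zero, trace_map_derivation, h₁, h₂, h₃, h₄, map_zero]
  simp only [cupSquare, derivPairing, trace_sub, trace_mul_comm (Matrix.map _ D)]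
  ring

end DerivationCochains

theorem cocycleC_eq_constantCoeff_derivPairing :
    cocycleC = fun μ ν => MvPolynomial.constantCoeff
      (derivPairing (MvPolynomial.pderiv 0) (MvPolynomial.pderiv 1) μ ν) :=
  rfl

noncomputable def sl2XYCochain : sl2XY [⋀^Fin 3]→ₗ[ℂ] ℂ :=
  ((-4 : ℂ)⁻¹ • MvPolynomial.lcoeff ℂ 0).compAlternatingMap
    ((derivTripleProduct (MvPolynomial.pderiv 0) (MvPolynomial.pderiv 1)).alternatization
      |>.compLinearMap sl2XY.incl.toLinearMap)

/-- **The square of the class `c` is null in `H⁴(sl₂[x,y])`**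
(Proposition 3.6 of the paper, cochain form): the cup square `c ∪ c` is the
Chevalley–Eilenberg coboundary of an alternating `ℂ`-trilinear 3-cochain `b`. -/
theorem sl2_polyXY_cocycle_square_null :
    ∃ b : (sl2XY [⋀^Fin 3]→ₗ[ℂ] ℂ),
      ∀ μ₁ μ₂ μ₃ μ₄ : sl2XY,
        -b ![⁅μ₁, μ₂⁆, μ₃, μ₄] + b ![⁅μ₁, μ₃⁆, μ₂, μ₄] - b ![⁅μ₁, μ₄⁆, μ₂, μ₃]
          - b ![⁅μ₂, μ₃⁆, μ₁, μ₄] + b ![⁅μ₂, μ₄⁆, μ₁, μ₃]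
          - b ![⁅μ₃, μ₄⁆, μ₁, μ₂] =
        cocycleC (μ₁ : Matrix (Fin 2) (Fin 2) PolyXY) μ₂ * cocycleC (μ₃ : Matrix (Fin 2) (Fin 2) PolyXY) μ₄
          - cocycleC (μ₁ : Matrix (Fin 2) (Fin 2) PolyXY) μ₃ * cocycleC (μ₂ : Matrix (Fin 2) (Fin 2) PolyXY) μ₄
          + cocycleC (μ₁ : Matrix (Fin 2) (Fin 2) PolyXY) μ₄ * cocycleC (μ₂ : Matrix (Fin 2) (Fin 2) PolyXY) μ₃ := by
  refine ⟨sl2XYCochain, fun μ₁ μ₂ μ₃ μ₄ => ?_⟩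
  change sl2XYCochain.lieCoboundary₃ μ₁ μ₂ μ₃ μ₄ =
    cupSquare cocycleC (μ₁ : Matrix (Fin 2) (Fin 2) PolyXY) μ₂ μ₃ μ₄
  rw [sl2XYCochain, AlternatingMap.lieCoboundary₃_compAlternatingMap,
    AlternatingMap.lieCoboundary₃_compLieHom, LieSubalgebra.coe_incl,
    lieCoboundary₃_alternatization_derivTripleProduct_of_trace_eq_zero _ _ μ₁.2 μ₂.2 μ₃.2 μ₄.2,
    cocycleC_eq_constantCoeff_derivPairing, ← map_cupSquare, LinearMap.smul_apply,
    MvPolynomial.lcoeff_apply, ← MvPolynomial.constantCoeff_eq, map_mul, map_neg, map_ofNat,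
    smul_eq_mul, ← mul_assoc]
  norm_num
end
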